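/- Let 𝔛 be a symmetric association scheme of class d ≥ 2 with p_1(0), p_1(1), …, p_1(d) mutually distinct, and write θ_i = p_1(i). Then the following are equivalent: (1) 𝔛 is a P-polynomial scheme with respect to A_1, i.e., P-polynomial with respect to some ordering A_0, A_1, A_{i_2}, …, A_{i_d}; (2) there exists l ∈ {2, 3, …, d} such that for every i ∈ {1, 2, …, d}, ∏_{j=1, j≠i}^d (θ_0 − θ_j)/(θ_i − θ_j) = −q_i(l). Moreover, if (2) holds then l = i_d, the last index of the P-polynomial ordering. -/

import Mathlib

open Matrix BigOperators Finset

/-- A symmetric association scheme of class `d` on a finite vertex set `V`,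
bundled together with its adjacency matrices, primitive idempotents,
eigenmatrices `P`, `Q` and Krein parameters. -/
structure SymmAssocScheme (d : ℕ) (V : Type*) [Fintype V] [DecidableEq V] where
  /-- the relations `R_0, …, R_d` -/
  R : Fin (d + 1) → Set (V × V)
  R_nonempty : ∀ i, (R i).Nonempty
  R_zero : R 0 = {p : V × V | p.1 = p.2}
  R_cover : ∀ p : V × V, ∃ i, p ∈ R i
  R_disjoint : ∀ i j, i ≠ j → R i ∩ R j = ∅
  R_symm : ∀ i, ∀ x y : V, (x, y) ∈ R i → (y, x) ∈ R i
  /-- the intersection numbers `p_{ij}^k` -/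
  pnum : Fin (d + 1) → Fin (d + 1) → Fin (d + 1) → ℕ
  pnum_spec : ∀ i j k, ∀ x y : V, (x, y) ∈ R k →
    pnum i j k = {z : V | (x, z) ∈ R i ∧ (z, y) ∈ R j}.ncard
  /-- the adjacency matrices `A_0, …, A_d` -/
  A : Fin (d + 1) → Matrix V V ℂ
  A_of_mem : ∀ i, ∀ x y : V, (x, y) ∈ R i → A i x y = 1
  A_of_not_mem : ∀ i, ∀ x y : V, (x, y) ∉ R i → A i x y = 0
  /-- the primitive idempotents `E_0, …, E_d` -/
  E : Fin (d + 1) → Matrix V V ℂ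
  E_zero : E 0 = (Fintype.card V : ℂ)⁻¹ • Matrix.of (fun _ _ => (1 : ℂ))
  E_sum : ∑ i, E i = (1 : Matrix V V ℂ)
  E_mul : ∀ i j, E i * E j = if i = j then E i else 0
  E_ne_zero : ∀ i, E i ≠ 0
  /-- the first eigenmatrix: `P i j = p_i(j)` -/
  P : Fin (d + 1) → Fin (d + 1) → ℝ
  /-- the second eigenmatrix: `Q i j = q_i(j)`; in particular `θ*_j = Q 1 j` -/
  Q : Fin (d + 1) → Fin (d + 1) → ℝ
  A_eq : ∀ i, A i = ∑ j, (P i j : ℂ) • E j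
  E_eq : ∀ i, E i = (Fintype.card V : ℂ)⁻¹ • ∑ j, (Q i j : ℂ) • A j
  /-- the Krein parameters `q_{ij}^k` -/
  krein : Fin (d + 1) → Fin (d + 1) → Fin (d + 1) → ℝ
  krein_spec : ∀ i j, Matrix.hadamard (E i) (E j) =
    (Fintype.card V : ℂ)⁻¹ • ∑ k, (krein i j k : ℂ) • E k
  krein_nonneg : ∀ i j k, 0 ≤ krein i j k

namespace SymmAssocScheme

variable {d : ℕ} {V : Type*} [Fintype V] [DecidableEq V]

/-- the `h`-fold Hadamard power `E_1^{∘h}` of `E_1`, with `E_1^{∘0} = J`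
the all-ones matrix. -/
noncomputable def hadPowE1 (S : SymmAssocScheme d V) : ℕ → Matrix V V ℂ
  | 0 => Matrix.of fun _ _ => 1
  | n + 1 => Matrix.hadamard (hadPowE1 S n) (S.E 1)

/-- `N h` is the set of indices `j` such that `E_j` is a component of `E_1^{∘h}`
(i.e. `E_j · E_1^{∘h} ≠ 0`) but not a component of `E_1^{∘l}` for any `l < h`. -/
def N (S : SymmAssocScheme d V) (h : ℕ) : Set (Fin (d + 1)) :=
  {j | S.E j * S.hadPowE1 h ≠ 0 ∧ ∀ l < h, S.E j * S.hadPowE1 l = 0}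

/-- `𝔛` is `Q`-polynomial with respect to the ordering `E_{σ 0}, E_{σ 1}, …, E_{σ d}`:
for each `h` there is a polynomial `v*_h` of degree exactly `h` with
`q_{σ h}(j) = v*_h(q_1(j))` for all `j`. -/
def IsQPolyOrdering (S : SymmAssocScheme d V) (σ : Equiv.Perm (Fin (d + 1))) : Prop :=
  ∀ h : Fin (d + 1), ∃ v : Polynomial ℝ, v.degree = (h : ℕ) ∧
    ∀ j, S.Q (σ h) j = v.eval (S.Q 1 j)

/-- `𝔛` is `Q`-polynomial with respect to `E_1`: it is `Q`-polynomial with respect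
to some ordering of the form `E_0, E_1, E_{i_2}, …, E_{i_d}`. -/
def IsQPolyE1 (S : SymmAssocScheme d V) : Prop :=
  ∃ σ : Equiv.Perm (Fin (d + 1)), σ 0 = 0 ∧ σ 1 = 1 ∧ S.IsQPolyOrdering σ

/-- `𝔛` is `P`-polynomial with respect to the ordering `A_{σ 0}, A_{σ 1}, …, A_{σ d}`. -/
def IsPPolyOrdering (S : SymmAssocScheme d V) (σ : Equiv.Perm (Fin (d + 1))) : Prop :=
  ∀ h : Fin (d + 1), ∃ v : Polynomial ℝ, v.degree = (h : ℕ) ∧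
    ∀ j, S.P (σ h) j = v.eval (S.P 1 j)

/-- `𝔛` is `P`-polynomial with respect to `A_1`. -/
def IsPPolyA1 (S : SymmAssocScheme d V) : Prop :=
  ∃ σ : Equiv.Perm (Fin (d + 1)), σ 0 = 0 ∧ σ 1 = 1 ∧ S.IsPPolyOrdering σ

/-- the ratio `K_i = ∏_{j=1, j≠i}^d (θ*_0 − θ*_j)/(θ*_i − θ*_j)`,
where `θ*_j = q_1(j)`. -/
noncomputable def K (S : SymmAssocScheme d V) (i : Fin (d + 1)) : ℝ :=
  ∏ j ∈ Finset.univ.filter (fun j => j ≠ 0 ∧ j ≠ i),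
    (S.Q 1 0 - S.Q 1 j) / (S.Q 1 i - S.Q 1 j)

end SymmAssocScheme

/-!
Write `θ_j = p_1(j)` and let `L_i` (`i ≠ 0`) be the Lagrange basis polynomials for the nodes
`θ_1, …, θ_d`. Since `A_1 = ∑ θ_j E_j`, we have `L_i(A_1) = L_i(θ_0) E_0 + E_i`, whose coefficient
on `A_m` is `(L_i(θ_0) + q_i(m)) / |X|`, and `L_i(θ_0)` is the product in (2). As the `L_i` span
the polynomials of degree `< d`, (2) holds for `l` iff `A_l` occurs in no `A_1^t` with `t < d`.

If `A_{i_h} = v_h(A_1)` with `deg v_h = h`, the `A_1^t` with `t < d` lie in the span of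
`A_{i_0}, …, A_{i_{d-1}}`, so `l = i_d` works. Conversely, let `Γ_n` be the set of `m` such that
`A_m` occurs in some `A_1^t` with `t < n`. The entries of `A_1^t` count walks, so once
`Γ_{n+1} = Γ_n` the sequence is constant; the powers `A_1^t`, `t ≤ d`, are linearly independent,
so `|Γ_n| ≥ n` and `Γ_{d+1}` contains every index. As `l ∉ Γ_d`, each step from `Γ_h` to
`Γ_{h+1}` adds exactly one index `i_h`, and by counting dimensions `A_{i_h}` is a polynomial in
`A_1` of degree `≤ h`, but not `< h` since `i_h ∉ Γ_h`. Finally `l` is determined by the column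
`q_·(l)` because `Q` is invertible.
-/

section OrthogonalIdempotents

open Polynomial

variable {R A ι : Type*} [CommRing R] [Ring A] [Algebra R A] [Fintype ι] [DecidableEq ι]
  {E : ι → A}

lemma sum_smul_mul_of_orthogonal (hE : ∀ i j, E i * E j = if i = j then E i else 0)
    (c : ι → R) (j : ι) : (∑ i, c i • E i) * E j = c j • E j := by
  simp [Finset.sum_mul, hE]

lemma sum_smul_mul_sum_smul_of_orthogonal (hE : ∀ i j, E i * E j = if i = j then E i else 0)
    (a b : ι → R) : (∑ i, a i • E i) * (∑ j, b j • E j) = ∑ i, (a i * b i) • E i := by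
  simp_rw [Finset.mul_sum, mul_smul_comm, sum_smul_mul_of_orthogonal hE, smul_smul, mul_comm]

lemma aeval_sum_smul_of_orthogonal (hE : ∀ i j, E i * E j = if i = j then E i else 0)
    (hsum : ∑ i, E i = 1) (c : ι → R) (g : R[X]) :
    aeval (∑ i, c i • E i) g = ∑ i, g.eval (c i) • E i := by
  induction g using Polynomial.induction_on with
  | C a => simp [Algebra.algebraMap_eq_smul_one, ← hsum, Finset.smul_sum]
  | add p q hp hq => simp [hp, hq, add_smul, Finset.sum_add_distrib]
  | monomial n a ih =>
    rw [pow_succ, ← mul_assoc, map_mul, ih, aeval_X, sum_smul_mul_sum_smul_of_orthogonal hE]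
    simp [mul_assoc]

end OrthogonalIdempotents

lemma exists_perm_mem_sdiff_of_card_eq {n : ℕ} {s : ℕ → Finset (Fin (n + 1))} (hs : Monotone s)
    (hcard : ∀ k ≤ n + 1, (s k).card = k) :
    ∃ σ : Equiv.Perm (Fin (n + 1)), ∀ h : Fin (n + 1), σ h ∈ s (h + 1) \ s h := by
  have hone : ∀ h : Fin (n + 1), (s (h + 1) \ s h).card = 1 := fun h => by
    rw [Finset.card_sdiff_of_subset (hs (Nat.le_succ h)), hcard _ (by omega), hcard _ (by omega)]
    omega
  choose g hg using fun h : Fin (n + 1) => Finset.card_eq_one.mp (hone h)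
  have hmem : ∀ h : Fin (n + 1), g h ∈ s (h + 1) \ s h := fun h =>
    hg h ▸ Finset.mem_singleton_self _
  have hinj : Function.Injective g := Function.Injective.of_lt_imp_ne fun a b hab heq =>
    (Finset.mem_sdiff.mp (hmem b)).2 (heq ▸ hs hab (Finset.mem_sdiff.mp (hmem a)).1)
  exact ⟨Equiv.ofBijective g (Finite.injective_iff_bijective.mp hinj), hmem⟩

lemma two_le_val_apply_last {d : ℕ} {σ : Equiv.Perm (Fin (d + 1))} (hd : 2 ≤ d) (h0 : σ 0 = 0)
    (h1 : σ 1 = 1) : 2 ≤ (σ (Fin.last d) : ℕ) := by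
  have hlast0 : σ (Fin.last d) ≠ 0 := h0 ▸ σ.injective.ne (by simp [Fin.ext_iff]; omega)
  have hlast1 : σ (Fin.last d) ≠ 1 := h1 ▸ σ.injective.ne (by
    simp [Fin.ext_iff, Nat.mod_eq_of_lt (by omega : 1 < d + 1)]; omega)
  rw [Ne, Fin.ext_iff] at hlast0 hlast1
  simp only [Fin.val_zero, Fin.val_one', Nat.mod_eq_of_lt (by omega : 1 < d + 1)] at hlast0 hlast1
  omega

namespace SymmAssocScheme

open Polynomial

variable {d : ℕ} {V : Type*} [Fintype V] [DecidableEq V] (S : SymmAssocScheme d V)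

noncomputable def relIdx (p : V × V) : Fin (d + 1) := (S.R_cover p).choose

noncomputable def basePair (m : Fin (d + 1)) : V × V := (S.R_nonempty m).some

lemma mem_R_relIdx (p : V × V) : p ∈ S.R (S.relIdx p) := (S.R_cover p).choose_spec

lemma basePair_mem (m : Fin (d + 1)) : S.basePair m ∈ S.R m := (S.R_nonempty m).some_mem

lemma relIdx_eq_of_mem {p : V × V} {m : Fin (d + 1)} (hp : p ∈ S.R m) : S.relIdx p = m := by
  by_contra h
  exact (S.R_disjoint _ _ h).subset ⟨S.mem_R_relIdx p, hp⟩

@[simp]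
lemma relIdx_basePair (m : Fin (d + 1)) : S.relIdx (S.basePair m) = m :=
  S.relIdx_eq_of_mem (S.basePair_mem m)

lemma relIdx_eq_zero_iff (x y : V) : S.relIdx (x, y) = 0 ↔ x = y := by
  constructor
  · intro h
    have hxy := S.mem_R_relIdx (x, y)
    rwa [h, S.R_zero] at hxy
  · rintro rfl
    exact S.relIdx_eq_of_mem (by simp [S.R_zero])

lemma A_apply (m : Fin (d + 1)) (x y : V) :
    S.A m x y = if S.relIdx (x, y) = m then 1 else 0 := by
  split_ifs with h
  · exact S.A_of_mem m x y (h ▸ S.mem_R_relIdx (x, y))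
  · exact S.A_of_not_mem m x y fun hm => h (S.relIdx_eq_of_mem hm)

lemma sum_smul_A_apply (c : Fin (d + 1) → ℝ) (x y : V) :
    (∑ m, c m • S.A m) x y = c (S.relIdx (x, y)) := by
  simp [Matrix.sum_apply, A_apply, Complex.real_smul]

lemma A_eq_sum_smul_E (i : Fin (d + 1)) : S.A i = ∑ j, S.P i j • S.E j := by
  simp_rw [S.A_eq i, ← algebraMap_smul ℂ (S.P i _)]
  rfl

lemma E_eq_sum_smul_A (i : Fin (d + 1)) :
    S.E i = ∑ m, ((Fintype.card V : ℝ)⁻¹ * S.Q i m) • S.A m := by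
  rw [S.E_eq i, Finset.smul_sum]
  refine Finset.sum_congr rfl fun m _ => ?_
  rw [smul_smul, ← algebraMap_smul ℂ ((Fintype.card V : ℝ)⁻¹ * S.Q i m) (S.A m)]
  simp

lemma card_ne_zero (S : SymmAssocScheme d V) : Fintype.card V ≠ 0 :=
  have : Nonempty V := ⟨(S.basePair 0).1⟩
  Fintype.card_ne_zero

lemma Q_zero_left (k : Fin (d + 1)) : S.Q 0 k = 1 := by
  have h := congrFun₂ (S.E_eq_sum_smul_A 0) (S.basePair k).1 (S.basePair k).2
  rw [sum_smul_A_apply, S.E_zero] at h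
  have hn : (Fintype.card V : ℝ)⁻¹ ≠ 0 := inv_ne_zero (Nat.cast_ne_zero.mpr S.card_ne_zero)
  simp only [Prod.mk.eta, relIdx_basePair, Matrix.smul_apply, Matrix.of_apply, smul_eq_mul,
    mul_one] at h
  refine (mul_eq_left₀ hn).mp (Complex.ofReal_injective ?_)
  push_cast at h ⊢
  exact h.symm

lemma aeval_A_one (g : ℝ[X]) : aeval (S.A 1) g = ∑ j, g.eval (S.P 1 j) • S.E j := by
  rw [S.A_eq_sum_smul_E 1]
  exact aeval_sum_smul_of_orthogonal S.E_mul S.E_sum _ g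

lemma eq_of_sum_smul_E_eq {c c' : Fin (d + 1) → ℝ}
    (h : ∑ j, c j • S.E j = ∑ j, c' j • S.E j) : c = c' := by
  funext j
  have hj := congrArg (· * S.E j) h
  simp only [sum_smul_mul_of_orthogonal S.E_mul] at hj
  exact smul_left_injective ℝ (S.E_ne_zero j) hj

/-- The coefficient of `A_m` in `g(A_1)`, see `aeval_A_one_eq_sum`. -/
noncomputable def polyCoeff (g : ℝ[X]) (m : Fin (d + 1)) : ℝ :=
  (Fintype.card V : ℝ)⁻¹ * ∑ j, g.eval (S.P 1 j) * S.Q j m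

lemma aeval_A_one_eq_sum (g : ℝ[X]) : aeval (S.A 1) g = ∑ m, S.polyCoeff g m • S.A m := by
  simp_rw [aeval_A_one, E_eq_sum_smul_A, Finset.smul_sum, smul_smul]
  rw [Finset.sum_comm]
  refine Finset.sum_congr rfl fun m _ => ?_
  rw [← Finset.sum_smul, polyCoeff, Finset.mul_sum]
  congr 1
  exact Finset.sum_congr rfl fun j _ => by ring

lemma aeval_A_one_apply (g : ℝ[X]) (x y : V) :
    aeval (S.A 1) g x y = S.polyCoeff g (S.relIdx (x, y)) := by
  rw [aeval_A_one_eq_sum, sum_smul_A_apply]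

lemma polyCoeff_of_aeval_eq_A {g : ℝ[X]} {k : Fin (d + 1)} (h : aeval (S.A 1) g = S.A k)
    (m : Fin (d + 1)) : S.polyCoeff g m = if m = k then 1 else 0 := by
  have hm := S.aeval_A_one_apply g (S.basePair m).1 (S.basePair m).2
  rw [h, A_apply, Prod.mk.eta, relIdx_basePair] at hm
  split_ifs at hm ⊢ <;> exact_mod_cast hm.symm

lemma aeval_A_one_eq_A_of_eval {g : ℝ[X]} {k : Fin (d + 1)}
    (h : ∀ j, g.eval (S.P 1 j) = S.P k j) : aeval (S.A 1) g = S.A k := by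
  simp_rw [aeval_A_one, h, ← A_eq_sum_smul_E]

lemma P_eq_eval_of_aeval_eq_A {g : ℝ[X]} {k : Fin (d + 1)} (h : aeval (S.A 1) g = S.A k)
    (j : Fin (d + 1)) : S.P k j = g.eval (S.P 1 j) := by
  rw [aeval_A_one, A_eq_sum_smul_E] at h
  exact congrFun (S.eq_of_sum_smul_E_eq h) j |>.symm

lemma Q_col_injective (hθ : Function.Injective (S.P 1)) {l l' : Fin (d + 1)}
    (h : ∀ j, S.Q j l = S.Q j l') : l = l' := by
  set g := Lagrange.interpolate Finset.univ (S.P 1) (S.P l)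
  have hg : aeval (S.A 1) g = S.A l := S.aeval_A_one_eq_A_of_eval fun j =>
    Lagrange.eval_interpolate_at_node _ hθ.injOn (Finset.mem_univ j)
  have hl : S.polyCoeff g l = S.polyCoeff g l' := by simp only [polyCoeff, h]
  by_contra hne
  rw [S.polyCoeff_of_aeval_eq_A hg, S.polyCoeff_of_aeval_eq_A hg, if_pos rfl,
    if_neg (Ne.symm hne)] at hl
  exact one_ne_zero hl

lemma polyCoeff_eq_zero_of_mem_span {T : Set ℝ[X]} {g : ℝ[X]} (hg : g ∈ Submodule.span ℝ T)
    {m : Fin (d + 1)} (hT : ∀ f ∈ T, S.polyCoeff f m = 0) : S.polyCoeff g m = 0 := by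
  induction hg using Submodule.span_induction with
  | mem f hf => exact hT f hf
  | zero => simp [polyCoeff]
  | add f g _ _ hf hg =>
    rw [polyCoeff] at hf hg ⊢
    simp only [eval_add, add_mul, Finset.sum_add_distrib, mul_add, hf, hg, add_zero]
  | smul a f _ hf =>
    rw [polyCoeff] at hf ⊢
    simp only [eval_smul, smul_eq_mul, mul_assoc, ← Finset.mul_sum]
    rw [mul_left_comm, hf, mul_zero]

noncomputable def lagrangeBasis (i : Fin (d + 1)) : ℝ[X] :=
  Lagrange.basis (Finset.univ.erase 0) (S.P 1) i

lemma eval_lagrangeBasis_zero (i : Fin (d + 1)) :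
    (S.lagrangeBasis i).eval (S.P 1 0) = ∏ j ∈ Finset.univ.filter (fun j => j ≠ 0 ∧ j ≠ i),
      (S.P 1 0 - S.P 1 j) / (S.P 1 i - S.P 1 j) := by
  have hs : (Finset.univ.erase (0 : Fin (d + 1))).erase i =
      Finset.univ.filter (fun j => j ≠ 0 ∧ j ≠ i) := by
    ext j
    simp [and_comm]
  simp [lagrangeBasis, Lagrange.basis, Lagrange.basisDivisor, eval_prod, hs, div_eq_inv_mul]

lemma polyCoeff_lagrangeBasis (hθ : Function.Injective (S.P 1)) {i : Fin (d + 1)} (hi : i ≠ 0)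
    (m : Fin (d + 1)) : S.polyCoeff (S.lagrangeBasis i) m =
      (Fintype.card V : ℝ)⁻¹ * ((S.lagrangeBasis i).eval (S.P 1 0) + S.Q i m) := by
  have hi' : i ∈ Finset.univ.erase 0 := by simpa using hi
  rw [polyCoeff, ← Finset.add_sum_erase _ _ (Finset.mem_univ 0), Q_zero_left, mul_one,
    Finset.sum_eq_single_of_mem i hi']
  · rw [lagrangeBasis, Lagrange.eval_basis_self hθ.injOn hi', one_mul]
  · intro j hj hji
    rw [lagrangeBasis, Lagrange.eval_basis_of_ne (Ne.symm hji) hj, zero_mul]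

lemma prod_eq_neg_Q_iff (hθ : Function.Injective (S.P 1))
    {i : Fin (d + 1)} (hi : i ≠ 0) (m : Fin (d + 1)) :
    (∏ j ∈ Finset.univ.filter (fun j => j ≠ 0 ∧ j ≠ i),
      (S.P 1 0 - S.P 1 j) / (S.P 1 i - S.P 1 j)) = -S.Q i m ↔
      S.polyCoeff (S.lagrangeBasis i) m = 0 := by
  rw [S.polyCoeff_lagrangeBasis hθ hi, ← eval_lagrangeBasis_zero, mul_eq_zero,
    or_iff_right (inv_ne_zero (Nat.cast_ne_zero.mpr S.card_ne_zero)), add_eq_zero_iff_eq_neg]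

lemma degree_lagrangeBasis_lt (hθ : Function.Injective (S.P 1)) {i : Fin (d + 1)} (hi : i ≠ 0) :
    (S.lagrangeBasis i).degree < d := by
  have hd : d ≠ 0 := by rintro rfl; exact hi (Fin.fin_one_eq_zero i)
  rw [lagrangeBasis, Lagrange.degree_basis hθ.injOn (by simpa using hi),
    Finset.card_erase_of_mem (Finset.mem_univ 0), Finset.card_univ, Fintype.card_fin]
  exact_mod_cast (by omega : d + 1 - 1 - 1 < d)

lemma degreeLT_le_span_lagrangeBasis (hθ : Function.Injective (S.P 1)) :
    degreeLT ℝ d ≤ Submodule.span ℝ (S.lagrangeBasis '' {i | i ≠ 0}) := by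
  intro f hf
  have hcard : (Finset.univ.erase (0 : Fin (d + 1))).card = d := by simp
  rw [Lagrange.eq_interpolate (f := f) (s := Finset.univ.erase 0) hθ.injOn
    (by rw [hcard]; exact mem_degreeLT.mp hf), Lagrange.interpolate_apply]
  refine Submodule.sum_mem _ fun i hi => ?_
  rw [← smul_eq_C_mul]
  exact Submodule.smul_mem _ _ (Submodule.subset_span ⟨i, (Finset.mem_erase.mp hi).1, rfl⟩)

lemma polyCoeff_lagrangeBasis_last_eq_zero (hθ : Function.Injective (S.P 1))
    {σ : Equiv.Perm (Fin (d + 1))} (hσ : S.IsPPolyOrdering σ) {i : Fin (d + 1)} (hi : i ≠ 0) :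
    S.polyCoeff (S.lagrangeBasis i) (σ (Fin.last d)) = 0 := by
  choose v hv_deg hv using hσ
  let w : Polynomial.Sequence ℝ :=
    { elems' := fun k => if hk : k < d + 1 then v ⟨k, hk⟩ else X ^ k
      degree_eq' := fun k => by split_ifs; exacts [hv_deg _, degree_X_pow k] }
  have hspan : Submodule.span ℝ (w '' Set.Iio d) = degreeLT ℝ d :=
    w.span_degreeLT fun k _ => (leadingCoeff_ne_zero.mpr (w.ne_zero k)).isUnit
  refine S.polyCoeff_eq_zero_of_mem_span
    (hspan ▸ mem_degreeLT.mpr (S.degree_lagrangeBasis_lt hθ hi)) ?_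
  rintro _ ⟨k, hk, rfl⟩
  have hk' : k < d + 1 := Nat.lt_succ_of_lt hk
  have hA : aeval (S.A 1) (w k) = S.A (σ ⟨k, hk'⟩) :=
    S.aeval_A_one_eq_A_of_eval fun j => by simp only [w, dif_pos hk', hv]
  rw [S.polyCoeff_of_aeval_eq_A hA, if_neg]
  intro h
  have := congrArg Fin.val (σ.injective h)
  simp only [Fin.val_last] at this
  exact (Set.mem_Iio.mp hk).ne this.symm

lemma A_one_pow_succ_apply_ne_zero_iff (t : ℕ) (x y : V) :
    (S.A 1 ^ (t + 1)) x y ≠ 0 ↔ ∃ z, S.A 1 x z ≠ 0 ∧ (S.A 1 ^ t) z y ≠ 0 := by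
  -- over `ℕ` a sum of products vanishes only termwise
  let N : Matrix V V ℕ := Matrix.of fun x y => if S.relIdx (x, y) = 1 then 1 else 0
  have hN : S.A 1 = N.map (Nat.castRingHom ℂ) := by
    ext x y
    simp [N, A_apply]
  rw [hN, ← Matrix.map_pow, ← Matrix.map_pow]
  simp only [Matrix.map_apply, Nat.coe_castRingHom, ne_eq, Nat.cast_eq_zero]
  simp [pow_succ', Matrix.mul_apply, Finset.sum_eq_zero_iff, not_or]

lemma A_one_pow_apply (t : ℕ) (x y : V) :
    (S.A 1 ^ t) x y = S.polyCoeff (X ^ t) (S.relIdx (x, y)) := by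
  rw [← S.aeval_A_one_apply, map_pow, aeval_X]

lemma polyCoeff_X_pow_ne_zero_iff (t : ℕ) (m : Fin (d + 1)) :
    S.polyCoeff (X ^ t) m ≠ 0 ↔ (S.A 1 ^ t) (S.basePair m).1 (S.basePair m).2 ≠ 0 := by
  rw [A_one_pow_apply, Prod.mk.eta, relIdx_basePair, ne_eq, ne_eq, Complex.ofReal_eq_zero]

/-- `reach n` is the set of `m` such that `A_m` occurs in some `A_1 ^ t` with `t < n`: the pairs
in `R_m` are joined by a walk of length `< n` in the graph `(X, R_1)`. -/
noncomputable def reach (n : ℕ) : Finset (Fin (d + 1)) :=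
  open scoped Classical in Finset.univ.filter fun m => ∃ t < n, S.polyCoeff (X ^ t) m ≠ 0

lemma mem_reach {n : ℕ} {m : Fin (d + 1)} :
    m ∈ S.reach n ↔ ∃ t < n, S.polyCoeff (X ^ t) m ≠ 0 := by
  simp [reach]

lemma reach_mono : Monotone S.reach := fun _ _ hnk _ hm =>
  let ⟨t, ht, hmt⟩ := S.mem_reach.mp hm
  S.mem_reach.mpr ⟨t, ht.trans_le hnk, hmt⟩

lemma mem_reach_succ {n : ℕ} {m : Fin (d + 1)} :
    m ∈ S.reach (n + 1) ↔ m ∈ S.reach n ∨ S.polyCoeff (X ^ n) m ≠ 0 := by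
  simp only [mem_reach, Nat.lt_succ_iff_lt_or_eq, or_and_right, exists_or, exists_eq_left]

lemma reach_one : S.reach 1 = {0} := by
  ext m
  rw [mem_reach_succ, polyCoeff_X_pow_ne_zero_iff, pow_zero, Matrix.one_apply,
    Finset.mem_singleton, ← S.relIdx_basePair m, relIdx_eq_zero_iff]
  simp [mem_reach]

lemma reach_two : S.reach 2 = {0, 1} := by
  ext m
  rw [mem_reach_succ, reach_one, polyCoeff_X_pow_ne_zero_iff, pow_one, A_apply, Prod.mk.eta,
    relIdx_basePair]
  simp

lemma reach_add_two_subset {n : ℕ} (h : S.reach (n + 1) ⊆ S.reach n) :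
    S.reach (n + 2) ⊆ S.reach (n + 1) := by
  intro m hm
  rcases S.mem_reach_succ.mp hm with hm | hmt
  · exact hm
  rw [polyCoeff_X_pow_ne_zero_iff, A_one_pow_succ_apply_ne_zero_iff] at hmt
  obtain ⟨z, hxz, hzy⟩ := hmt
  rw [A_one_pow_apply, ne_eq, Complex.ofReal_eq_zero] at hzy
  obtain ⟨s, hs, hzs⟩ := S.mem_reach.mp (h (S.mem_reach_succ.mpr (Or.inr hzy)))
  refine S.mem_reach.mpr ⟨s + 1, Nat.succ_lt_succ hs, ?_⟩
  rw [polyCoeff_X_pow_ne_zero_iff, A_one_pow_succ_apply_ne_zero_iff]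
  exact ⟨z, hxz, by rwa [A_one_pow_apply, ne_eq, Complex.ofReal_eq_zero]⟩

lemma reach_subset_of_reach_succ_subset {n k : ℕ} (h : S.reach (n + 1) ⊆ S.reach n)
    (hk : n ≤ k) : S.reach k ⊆ S.reach n := by
  have hstable : ∀ k, n ≤ k → S.reach (k + 1) ⊆ S.reach k := fun k hk => by
    induction k, hk using Nat.le_induction with
    | base => exact h
    | succ k _ ih => exact S.reach_add_two_subset ih
  induction k, hk using Nat.le_induction with
  | base => exact subset_rfl
  | succ k hk ih => exact (hstable k hk).trans ih

lemma polyCoeff_eq_zero_of_mem_degreeLT {n : ℕ} {g : ℝ[X]} (hg : g ∈ degreeLT ℝ n)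
    {m : Fin (d + 1)} (hm : m ∉ S.reach n) : S.polyCoeff g m = 0 := by
  classical
  rw [degreeLT_eq_span_X_pow] at hg
  refine S.polyCoeff_eq_zero_of_mem_span hg ?_
  simp only [Finset.coe_image, Finset.coe_range, Set.mem_image, Set.mem_Iio,
    forall_exists_index, and_imp, forall_apply_eq_imp_iff₂]
  exact fun t ht => by_contra fun h => hm (S.mem_reach.mpr ⟨t, ht, h⟩)

noncomputable def powerSpan (n : ℕ) : Submodule ℝ (Matrix V V ℂ) :=
  (degreeLT ℝ n).map (aeval (S.A 1)).toLinearMap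

lemma eq_zero_of_aeval_A_one_eq_zero (hθ : Function.Injective (S.P 1)) {g : ℝ[X]}
    (hg : g ∈ degreeLT ℝ (d + 1)) (h : aeval (S.A 1) g = 0) : g = 0 := by
  rw [aeval_A_one] at h
  have heval := S.eq_of_sum_smul_E_eq (c' := 0) (by rw [h]; simp)
  by_contra hg0
  refine hg0 (g.eq_zero_of_natDegree_lt_card_of_eval_eq_zero hθ (congrFun heval) ?_)
  rw [Fintype.card_fin, natDegree_lt_iff_degree_lt hg0]
  exact_mod_cast mem_degreeLT.mp hg

lemma finrank_powerSpan (hθ : Function.Injective (S.P 1)) {n : ℕ} (hn : n ≤ d + 1) :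
    Module.finrank ℝ (S.powerSpan n) = n := by
  have hinj : Function.Injective ((aeval (S.A 1)).toLinearMap ∘ₗ (degreeLT ℝ n).subtype) := by
    rw [← LinearMap.ker_eq_bot, LinearMap.ker_eq_bot']
    rintro ⟨g, hg⟩ h
    exact Subtype.ext (S.eq_zero_of_aeval_A_one_eq_zero hθ (degreeLT_mono hn hg) h)
  rw [powerSpan, ← Submodule.range_subtype (degreeLT ℝ n), ← LinearMap.range_comp,
    LinearMap.finrank_range_of_inj hinj, Module.finrank_eq_card_basis (degreeLT.basis ℝ n),
    Fintype.card_fin]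

lemma powerSpan_le_span_reach (n : ℕ) :
    S.powerSpan n ≤ Submodule.span ℝ (S.A '' S.reach n) := by
  rintro _ ⟨g, hg, rfl⟩
  rw [AlgHom.toLinearMap_apply, aeval_A_one_eq_sum]
  refine Submodule.sum_mem _ fun m _ => ?_
  by_cases hm : m ∈ S.reach n
  · exact Submodule.smul_mem _ _ (Submodule.subset_span ⟨m, hm, rfl⟩)
  · rw [S.polyCoeff_eq_zero_of_mem_degreeLT hg hm, zero_smul]
    exact Submodule.zero_mem _

lemma finrank_span_A_le (s : Finset (Fin (d + 1))) :
    Module.finrank ℝ (Submodule.span ℝ (S.A '' s)) ≤ s.card := by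
  rw [← Finset.coe_image]
  exact (finrank_span_finset_le_card _).trans Finset.card_image_le

lemma le_card_reach (hθ : Function.Injective (S.P 1)) {n : ℕ} (hn : n ≤ d + 1) :
    n ≤ (S.reach n).card :=
  calc n = Module.finrank ℝ (S.powerSpan n) := (S.finrank_powerSpan hθ hn).symm
    _ ≤ Module.finrank ℝ (Submodule.span ℝ (S.A '' S.reach n)) :=
      Submodule.finrank_mono (S.powerSpan_le_span_reach n)
    _ ≤ (S.reach n).card := S.finrank_span_A_le _

lemma reach_eq_univ (hθ : Function.Injective (S.P 1)) : S.reach (d + 1) = Finset.univ :=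
  Finset.eq_univ_of_card _ <| le_antisymm (Finset.card_le_univ _ |>.trans (by simp))
    (by simpa using S.le_card_reach hθ le_rfl)

lemma card_reach_eq (hθ : Function.Injective (S.P 1)) {l : Fin (d + 1)} (hl : l ∉ S.reach d)
    {n : ℕ} (hn : n ≤ d + 1) : (S.reach n).card = n := by
  have hstrict : ∀ p ≤ d, S.reach p ⊂ S.reach (p + 1) := fun p hp =>
    Finset.ssubset_def.mpr ⟨S.reach_mono p.le_succ, fun h => hl <| S.reach_mono hp <|
      S.reach_subset_of_reach_succ_subset h (by omega) (S.reach_eq_univ hθ ▸ Finset.mem_univ l)⟩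
  have hgrow : ∀ j, n + j ≤ d + 1 → (S.reach n).card + j ≤ (S.reach (n + j)).card := by
    intro j
    induction j with
    | zero => simp
    | succ j ih =>
      intro hj
      have := Finset.card_lt_card (hstrict (n + j) (by omega))
      have := ih (by omega)
      simp only [← add_assoc]
      omega
  have hup := hgrow (d + 1 - n) (by omega)
  rw [Nat.add_sub_cancel' hn, S.reach_eq_univ hθ, Finset.card_univ, Fintype.card_fin] at hup
  have := S.le_card_reach hθ hn
  omega

lemma isPPolyOrdering_of_mem_reach_sdiff (hθ : Function.Injective (S.P 1))
    (hcard : ∀ n ≤ d + 1, (S.reach n).card = n) {σ : Equiv.Perm (Fin (d + 1))}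
    (hσ : ∀ h : Fin (d + 1), σ h ∈ S.reach (h + 1) \ S.reach h) : S.IsPPolyOrdering σ := by
  intro h
  obtain ⟨hm, hm'⟩ := Finset.mem_sdiff.mp (hσ h)
  have hspan : S.powerSpan (h + 1) = Submodule.span ℝ (S.A '' S.reach (h + 1)) :=
    Submodule.eq_of_le_of_finrank_le (S.powerSpan_le_span_reach _) <|
      (S.finrank_span_A_le _).trans <| by
        rw [hcard _ (by omega), S.finrank_powerSpan hθ (by omega)]
  obtain ⟨v, hv, hvA⟩ : S.A (σ h) ∈ S.powerSpan (h + 1) :=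
    hspan ▸ Submodule.subset_span ⟨σ h, hm, rfl⟩
  rw [AlgHom.toLinearMap_apply] at hvA
  refine ⟨v, ?_, S.P_eq_eval_of_aeval_eq_A hvA⟩
  have hcoeff : S.polyCoeff v (σ h) = 1 := by rw [S.polyCoeff_of_aeval_eq_A hvA, if_pos rfl]
  have hv0 : v ≠ 0 := by
    rintro rfl
    simp [polyCoeff] at hcoeff
  have hlow : v ∉ degreeLT ℝ h := fun hlt =>
    one_ne_zero (hcoeff ▸ S.polyCoeff_eq_zero_of_mem_degreeLT hlt hm')
  rw [SetLike.mem_coe, mem_degreeLT, degree_eq_natDegree hv0, Nat.cast_lt] at hv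
  rw [mem_degreeLT, degree_eq_natDegree hv0, Nat.cast_lt] at hlow
  rw [degree_eq_natDegree hv0, Nat.cast_inj]
  omega

lemma notMem_reach_of_polyCoeff_lagrangeBasis (hθ : Function.Injective (S.P 1))
    {l : Fin (d + 1)} (hl : ∀ i, i ≠ 0 → S.polyCoeff (S.lagrangeBasis i) l = 0) :
    l ∉ S.reach d := by
  rw [mem_reach]
  rintro ⟨t, ht, hlt⟩
  refine hlt (S.polyCoeff_eq_zero_of_mem_span (S.degreeLT_le_span_lagrangeBasis hθ ?_) ?_)
  · exact mem_degreeLT.mpr (by rw [degree_X_pow]; exact_mod_cast ht)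
  · rintro _ ⟨i, hi, rfl⟩
    exact hl i hi

lemma isPPolyA1_of_notMem_reach (hθ : Function.Injective (S.P 1)) (hd : 1 ≤ d)
    {l : Fin (d + 1)} (hl : l ∉ S.reach d) : S.IsPPolyA1 := by
  have hcard := fun n => S.card_reach_eq hθ hl (n := n)
  obtain ⟨σ, hσ⟩ := exists_perm_mem_sdiff_of_card_eq S.reach_mono hcard
  refine ⟨σ, ?_, ?_, S.isPPolyOrdering_of_mem_reach_sdiff hθ hcard hσ⟩
  · have h0 := hσ 0
    rw [Fin.val_zero, S.reach_one, Finset.mem_sdiff, Finset.mem_singleton] at h0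
    exact h0.1
  · have h1 := hσ 1
    rw [Fin.val_one', Nat.mod_eq_of_lt (by omega), S.reach_two, S.reach_one] at h1
    simp only [Finset.mem_sdiff, Finset.mem_insert, Finset.mem_singleton] at h1
    tauto

end SymmAssocScheme

/-- the `P`-polynomial analogue of the main theorem. For a
symmetric association scheme of class `d ≥ 2` with `θ_0 = p_1(0), …, θ_d = p_1(d)`
mutually distinct: `𝔛` is `P`-polynomial with respect to `A_1` iff there exists
`l ∈ {2, …, d}` such that `∏_{j=1,j≠i}^d (θ_0 − θ_j)/(θ_i − θ_j) = −q_i(l)` for all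
`i ∈ {1, …, d}`; moreover, in that case `l = i_d`, the last index of any such
`P`-polynomial ordering. -/
theorem statement13 {d : ℕ} {V : Type*} [Fintype V] [DecidableEq V]
    (S : SymmAssocScheme d V) (hd : 2 ≤ d)
    (hθ : Function.Injective fun j : Fin (d + 1) => S.P 1 j) :
    (S.IsPPolyA1 ↔
      ∃ l : Fin (d + 1), 2 ≤ (l : ℕ) ∧
        ∀ i : Fin (d + 1), i ≠ 0 →
          (∏ j ∈ Finset.univ.filter (fun j => j ≠ 0 ∧ j ≠ i),
            (S.P 1 0 - S.P 1 j) / (S.P 1 i - S.P 1 j)) = -S.Q i l) ∧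
    (∀ l : Fin (d + 1), 2 ≤ (l : ℕ) →
      (∀ i : Fin (d + 1), i ≠ 0 →
        (∏ j ∈ Finset.univ.filter (fun j => j ≠ 0 ∧ j ≠ i),
          (S.P 1 0 - S.P 1 j) / (S.P 1 i - S.P 1 j)) = -S.Q i l) →
      ∀ σ : Equiv.Perm (Fin (d + 1)), σ 0 = 0 → σ 1 = 1 → S.IsPPolyOrdering σ →
        σ (Fin.last d) = l) := by
  refine ⟨⟨?_, ?_⟩, ?_⟩
  · rintro ⟨σ, h0, h1, hσ⟩
    exact ⟨σ (Fin.last d), two_le_val_apply_last hd h0 h1, fun i hi =>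
      (S.prod_eq_neg_Q_iff hθ hi _).mpr (S.polyCoeff_lagrangeBasis_last_eq_zero hθ hσ hi)⟩
  · rintro ⟨l, -, hl⟩
    exact S.isPPolyA1_of_notMem_reach hθ (by omega)
      (S.notMem_reach_of_polyCoeff_lagrangeBasis hθ fun i hi =>
        (S.prod_eq_neg_Q_iff hθ hi l).mp (hl i hi))
  · intro l _ hl σ _ _ hσ
    refine S.Q_col_injective hθ fun j => ?_
    rcases eq_or_ne j 0 with rfl | hj
    · rw [S.Q_zero_left, S.Q_zero_left]
    · have hlast := (S.prod_eq_neg_Q_iff hθ hj _).mpr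
        (S.polyCoeff_lagrangeBasis_last_eq_zero hθ hσ hj)
      linarith [hl j hj]
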